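/- Let G be an abelian group of order t⁴c² with subgroups H ≤ U ≤ V ≤ G of orders t, t²c, t³c² respectively. Suppose there exists a (tc,t) LP-partition {R₁,…,R_t} in G−V relative to H, and a (c,t) LP-packing {P₁,…,P_t} in V/H relative to U/H. Let P'_i be the preimage of P_i in V under the quotient map. Then {P'₁ ∪ R₁, …, P'_t ∪ R_t} is a (tc,t) LP-packing in G relative to U. -/

import Mathlib

open Finset BigOperators

variable {G : Type*}

/-- Number of ordered pairs `(x,y)` with `x,y ∈ D`, `x ≠ y`, `x * y⁻¹ = g`. -/
noncomputable def diffCount [Group G] (D : Set G) (g : G) : ℕ :=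
  Nat.card {p : G × G // p.1 ∈ D ∧ p.2 ∈ D ∧ p.1 ≠ p.2 ∧ p.1 * p.2⁻¹ = g}

/-- `D` is a `(v,k,λ,μ)` partial difference set in `G`. -/
def IsPDS [Group G] (D : Set G) (v k : ℕ) (l m : ℤ) : Prop :=
  Nat.card G = v ∧ Nat.card D = k ∧
    ∀ g : G, g ≠ 1 →
      (g ∈ D → (diffCount D g : ℤ) = l) ∧ (g ∉ D → (diffCount D g : ℤ) = m)

/-- A regular PDS: a PDS avoiding the identity and closed under inversion. -/
def IsRegularPDS [Group G] (D : Set G) (v k : ℕ) (l m : ℤ) : Prop :=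
  IsPDS D v k l m ∧ (1 : G) ∉ D ∧ D⁻¹ = D

/-- A regular `(n,r)` Latin square type PDS. -/
def IsLatinPDS [Group G] (D : Set G) (n r : ℕ) : Prop :=
  IsRegularPDS D (n ^ 2) (r * (n - 1)) ((n : ℤ) + (r : ℤ) ^ 2 - 3 * r) ((r : ℤ) ^ 2 - r)

/-- A regular `(n,r)` negative Latin square type PDS. -/
def IsNegLatinPDS [Group G] (D : Set G) (n r : ℕ) : Prop :=
  IsRegularPDS D (n ^ 2) (r * (n + 1)) (-(n : ℤ) + (r : ℤ) ^ 2 + 3 * r) ((r : ℤ) ^ 2 + r)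

/-- Character sum `χ(D) = ∑_{d ∈ D} χ(d)`. -/
noncomputable def charSum [Group G] (χ : G →* ℂˣ) (D : Set G) : ℂ :=
  ∑ᶠ d ∈ D, (χ d : ℂ)

/-- The multiset of character sums `{χ(P 0), …, χ(P (t-1))}`. -/
noncomputable def charMultiset [Group G] {t : ℕ} (χ : G →* ℂˣ) (P : Fin t → Set G) :
    Multiset ℂ :=
  (Finset.univ.val : Multiset (Fin t)).map fun i => charSum χ (P i)

/-- `χ` is principal on the subgroup `U`. -/
def IsPrincipalOn [Group G] (χ : G →* ℂˣ) (U : Subgroup G) : Prop :=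
  ∀ u ∈ U, χ u = 1

/-- A `(c,t)` LP-packing in `G` relative to `U`. -/
def IsLPPacking [CommGroup G] (c t : ℕ) (P : Fin t → Set G) (U : Subgroup G) : Prop :=
  Nat.card G = t ^ 2 * c ^ 2 ∧ Nat.card U = t * c ∧
    (∀ i, IsLatinPDS (P i) (t * c) c) ∧
    (∀ i j, i ≠ j → Disjoint (P i) (P j)) ∧
    (⋃ i, P i) = Set.univ \ (U : Set G)

/-- A `(c,t-1)` NLP-packing in `G`. -/
def IsNLPPacking [CommGroup G] (c t : ℕ) (P : Fin (t - 1) → Set G) : Prop :=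
  Nat.card G = t ^ 2 * c ^ 2 ∧
    (∀ i, IsNegLatinPDS (P i) (t * c) c) ∧
    IsNegLatinPDS (Set.univ \ ({1} ∪ ⋃ i, P i)) (t * c) (c - 1)

/-- A `(c,t)` LP-partition in `G − V` relative to `H`. -/
def IsLPPartition [CommGroup G] (c t : ℕ) (R : Fin t → Set G) (V H : Subgroup G) : Prop :=
  Nat.card G = t ^ 2 * c ^ 2 ∧ Nat.card V = t * c ^ 2 ∧ H ≤ V ∧
    (∀ i, Nat.card (R i) = (t - 1) * c ^ 2) ∧
    (∀ i j, i ≠ j → Disjoint (R i) (R j)) ∧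
    (⋃ i, R i) = Set.univ \ (V : Set G) ∧
    ∀ χ : G →* ℂˣ, χ ≠ 1 →
      (IsPrincipalOn χ V → charMultiset χ R = Multiset.replicate t (-(c : ℂ) ^ 2)) ∧
      (¬ IsPrincipalOn χ V → IsPrincipalOn χ H →
        charMultiset χ R = Multiset.replicate t 0) ∧
      (¬ IsPrincipalOn χ H →
        charMultiset χ R = ((t : ℂ) - 1) * (c : ℂ) ::ₘ Multiset.replicate (t - 1) (-(c : ℂ)))

/-!
Each `P'ᵢ ∪ Rᵢ` is recognised as a Latin square type PDS through its character sums: in a group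
of order `n²`, a set `D ∌ 1` of size `r(n - 1)` is an `(n, r)` Latin square type PDS iff
`χ(D) ∈ {n - r, -r}` for every nonprincipal `χ` (Fourier inversion of the difference counts;
`D⁻¹ = D` because these values are real).

If `χ` is nonprincipal on `H`, then `χ(P'ᵢ) = 0` since `P'ᵢ` is a union of `H`-cosets, and
`χ(Rᵢ) ∈ {(t - 1)tc, -tc}`. If `χ` is principal on `H`, then `χ(P'ᵢ) = t ψ(Pᵢ)` for the character
`ψ` it induces on `V/H`: when `χ` is principal on `V` this is `t c (tc - 1)` while
`χ(Rᵢ) = -(tc)²`, and otherwise `ψ(Pᵢ) ∈ {tc - c, -c}` while `χ(Rᵢ) = 0`. In all cases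
`χ(P'ᵢ ∪ Rᵢ) ∈ {t·tc - tc, -tc}`.
-/

open scoped Classical ComplexConjugate

lemma charSum_union {G : Type*} [Group G] [Finite G] (χ : G →* ℂˣ) {D E : Set G}
    (h : Disjoint D E) : charSum χ (D ∪ E) = charSum χ D + charSum χ E :=
  finsum_mem_union h D.toFinite E.toFinite

section Characters

variable {G : Type*} [CommGroup G] [Fintype G]

lemma charSum_eq_sum_ite (χ : G →* ℂˣ) (D : Set G) :
    charSum χ D = ∑ g, if g ∈ D then (χ g : ℂ) else 0 := by
  rw [charSum, finsum_mem_def, finsum_eq_sum_of_fintype]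
  simp only [Set.indicator_apply]

lemma charSum_eq_zero_of_mul_mem_iff {χ : G →* ℂˣ} {D : Set G} {x : G} (hx : χ x ≠ 1)
    (hD : ∀ g, x * g ∈ D ↔ g ∈ D) : charSum χ D = 0 := by
  have hshift : charSum χ D = χ x * charSum χ D :=
    calc charSum χ D = ∑ g, if x * g ∈ D then (χ (x * g) : ℂ) else 0 := by
          rw [charSum_eq_sum_ite]
          exact (Fintype.sum_equiv (Equiv.mulLeft x) _ _ fun g => rfl).symm
      _ = χ x * charSum χ D := by simp [hD, charSum_eq_sum_ite, mul_ite, Finset.mul_sum]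
  have hx' : (χ x : ℂ) - 1 ≠ 0 := sub_ne_zero.2 fun h => hx (Units.ext h)
  have hzero : ((χ x : ℂ) - 1) * charSum χ D = 0 := by linear_combination -hshift
  exact (mul_eq_zero.1 hzero).resolve_left hx'

lemma sum_char_eq_zero {χ : G →* ℂˣ} (hχ : χ ≠ 1) : ∑ g, (χ g : ℂ) = 0 :=
  sum_hom_units_eq_zero ((Units.coeHom ℂ).comp χ) fun h =>
    hχ (MonoidHom.ext fun g => Units.ext (DFunLike.congr_fun h g))

lemma conj_char (χ : G →* ℂˣ) (g : G) : conj (χ g : ℂ) = (χ g : ℂ)⁻¹ := by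
  have hpow : (χ g : ℂ) ^ Fintype.card G = 1 := by
    rw [← Units.val_pow_eq_pow_val, ← map_pow, pow_card_eq_one, map_one, Units.val_one]
  exact (Complex.inv_eq_conj (Complex.norm_eq_one_of_pow_eq_one hpow Fintype.card_ne_zero)).symm

lemma charSum_inv (χ : G →* ℂˣ) (D : Set G) : charSum χ D⁻¹ = conj (charSum χ D) := by
  simp only [charSum_eq_sum_ite, map_sum]
  refine Fintype.sum_equiv (Equiv.inv G) _ _ fun g => ?_
  by_cases hg : g⁻¹ ∈ D <;> simp [hg, conj_char]

end Characters

lemma charSum_eq_card {G : Type*} [CommGroup G] [Finite G] (χ : G →* ℂˣ) {D : Set G}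
    (h : ∀ d ∈ D, χ d = 1) : charSum χ D = Nat.card D := by
  have := Fintype.ofFinite G
  simp +contextual [charSum_eq_sum_ite, h, Nat.card_eq_fintype_card, Fintype.card_subtype]

-- Supplies `HasEnoughRootsOfUnity ℂ (Monoid.exponent G)`, on which the duality theory rests.
instance (G : Type*) [Group G] [Finite G] : NeZero (Monoid.exponent G : ℂ) :=
  ⟨Nat.cast_ne_zero.2 Monoid.exponent_ne_zero_of_finite⟩

section Duality

variable {G : Type*} [CommGroup G] [Fintype G]

lemma sum_dual_apply [Fintype (G →* ℂˣ)] (g : G) :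
    ∑ χ : G →* ℂˣ, (χ g : ℂ) = if g = 1 then (Nat.card G : ℂ) else 0 := by
  split_ifs with hg
  · simp [hg, ← Nat.card_eq_fintype_card, CommGroup.card_monoidHom_of_hasEnoughRootsOfUnity]
  · obtain ⟨χ, hχ⟩ := CommGroup.exists_apply_ne_one_of_hasEnoughRootsOfUnity G ℂ hg
    exact sum_char_eq_zero (χ := MonoidHom.eval g) fun h => hχ (DFunLike.congr_fun h χ)

lemma eq_of_forall_sum_mul_char_eq {a b : G → ℂ}
    (h : ∀ χ : G →* ℂˣ, ∑ g, a g * χ g = ∑ g, b g * χ g) : a = b := by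
  suffices ∀ f : G → ℂ, (∀ χ : G →* ℂˣ, ∑ g, f g * χ g = 0) → f = 0 by
    exact sub_eq_zero.1 (this (a - b) fun χ => by simp [sub_mul, h χ])
  intro f hf
  funext g₀
  have := Fintype.ofFinite (G →* ℂˣ)
  have hsum : ∑ χ : G →* ℂˣ, (∑ g, f g * χ g) * χ g₀⁻¹ = f g₀ * Nat.card G := by
    simp_rw [Finset.sum_mul, mul_assoc, ← Units.val_mul, ← map_mul]
    rw [Finset.sum_comm]
    simp_rw [← Finset.mul_sum, sum_dual_apply, mul_inv_eq_one, mul_ite, mul_zero,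
      Finset.sum_ite_eq', Finset.mem_univ, if_true]
  simp only [hf, zero_mul, Finset.sum_const_zero] at hsum
  exact (mul_eq_zero.1 hsum.symm).resolve_right (Nat.cast_ne_zero.2 Nat.card_pos.ne')

lemma inv_eq_self_of_forall_conj_charSum {D : Set G}
    (h : ∀ χ : G →* ℂˣ, conj (charSum χ D) = charSum χ D) : D⁻¹ = D := by
  have hind := eq_of_forall_sum_mul_char_eq (a := fun g => if g ∈ D⁻¹ then 1 else 0)
    (b := fun g => if g ∈ D then 1 else 0) fun χ => by
      simp only [ite_mul, one_mul, zero_mul, ← charSum_eq_sum_ite, charSum_inv, h χ]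
  ext g
  have := congr_fun hind g
  split_ifs at this <;> simp_all

end Duality

section PartialDifferenceSets

variable {G : Type*} [CommGroup G] [Fintype G]

lemma diffCount_one (D : Set G) : diffCount D 1 = 0 := by
  simp [diffCount, mul_inv_eq_one]

lemma natCast_diffCount (D : Set G) (g : G) :
    (diffCount D g : ℂ) =
      ∑ p : G × G, if p.1 ∈ D ∧ p.2 ∈ D ∧ p.1 ≠ p.2 ∧ p.1 * p.2⁻¹ = g then 1 else 0 := by
  simp [diffCount, Nat.card_eq_fintype_card, Fintype.card_subtype, Finset.sum_boole]

lemma sum_diffCount_mul_char (χ : G →* ℂˣ) (D : Set G) :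
    ∑ g, (diffCount D g : ℂ) * χ g = charSum χ D * conj (charSum χ D) - Nat.card D := by
  calc ∑ g, (diffCount D g : ℂ) * χ g
      = ∑ p : G × G,
          if p.1 ∈ D ∧ p.2 ∈ D ∧ p.1 ≠ p.2 then (χ (p.1 * p.2⁻¹) : ℂ) else 0 := by
        simp_rw [natCast_diffCount, Finset.sum_mul, ite_mul, one_mul, zero_mul]
        rw [Finset.sum_comm]
        refine Finset.sum_congr rfl fun p _ => ?_
        simp only [← and_assoc, ite_and]
        split_ifs <;> simp [Finset.sum_ite_eq]
    _ = ∑ p : G × G, ((if p.1 ∈ D then (χ p.1 : ℂ) else 0) *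
          (if p.2 ∈ D then (χ p.2⁻¹ : ℂ) else 0) - if p.1 ∈ D ∧ p.1 = p.2 then 1 else 0) := by
        refine Finset.sum_congr rfl fun ⟨x, y⟩ _ => ?_
        by_cases hxy : x = y
        · subst hxy; by_cases hx : x ∈ D <;> simp [hx]
        · by_cases hx : x ∈ D <;> by_cases hy : y ∈ D <;> simp [hx, hy, hxy]
    _ = charSum χ D * conj (charSum χ D) - Nat.card D := by
        have hconj : ∑ y, (if y ∈ D then (χ y⁻¹ : ℂ) else 0) = conj (charSum χ D) := by
          simp [charSum_eq_sum_ite, apply_ite, conj_char]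
        have hdiag :
            ∑ p : G × G, (if p.1 ∈ D ∧ p.1 = p.2 then (1 : ℂ) else 0) = Nat.card D := by
          simp [Fintype.sum_prod_type, ite_and, Nat.card_eq_fintype_card, Fintype.card_subtype]
        rw [Finset.sum_sub_distrib, hdiag, ← hconj, charSum_eq_sum_ite, Finset.sum_mul_sum,
          Fintype.sum_prod_type]

lemma sum_ite_mul_char {D : Set G} (h1 : (1 : G) ∉ D) (l m : ℂ) (χ : G →* ℂˣ) :
    ∑ g, (if g = 1 then 0 else if g ∈ D then l else m) * (χ g : ℂ) =
      l * charSum χ D + m * (∑ g, (χ g : ℂ) - 1 - charSum χ D) := by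
  have hone : ∑ g, (if g = 1 then (χ g : ℂ) else 0) = 1 := by simp
  rw [← hone, charSum_eq_sum_ite, Finset.mul_sum, ← Finset.sum_sub_distrib,
    ← Finset.sum_sub_distrib, Finset.mul_sum, ← Finset.sum_add_distrib]
  refine Finset.sum_congr rfl fun g _ => ?_
  by_cases hg : g = 1
  · subst hg; simp [h1]
  · by_cases hgD : g ∈ D <;> simp [hg, hgD]

theorem isPDS_iff_charSum {D : Set G} {v k : ℕ} {l m : ℤ} (hv : Nat.card G = v)
    (hk : Nat.card D = k) (h1 : (1 : G) ∉ D) (hsym : D⁻¹ = D) :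
    IsPDS D v k l m ↔ ∀ χ : G →* ℂˣ,
      charSum χ D ^ 2 - k = l * charSum χ D + m * (∑ g, (χ g : ℂ) - 1 - charSum χ D) := by
  have hconj (χ : G →* ℂˣ) : conj (charSum χ D) = charSum χ D := by
    rw [← charSum_inv, hsym]
  let profile : G → ℂ := fun g => if g = 1 then 0 else if g ∈ D then (l : ℂ) else m
  calc IsPDS D v k l m ↔ (fun g => (diffCount D g : ℂ)) = profile := by
        simp only [IsPDS, hv, hk, true_and, funext_iff, profile]
        refine forall_congr' fun g => ?_
        by_cases hg : g = 1
        · simp [hg, diffCount_one]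
        · by_cases hgD : g ∈ D <;> simp [hg, hgD, ← Int.cast_inj (α := ℂ)]
    _ ↔ ∀ χ : G →* ℂˣ, ∑ g, (diffCount D g : ℂ) * χ g = ∑ g, profile g * χ g :=
        ⟨fun h χ => by simp only [← h], eq_of_forall_sum_mul_char_eq⟩
    _ ↔ _ := by simp only [sum_diffCount_mul_char, hconj, profile, sum_ite_mul_char h1, hk, sq]

end PartialDifferenceSets

section LatinSquareType

variable {G : Type*} [CommGroup G] [Finite G]

theorem isLatinPDS_iff_charSum {D : Set G} {n r : ℕ} (hv : Nat.card G = n ^ 2)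
    (hk : Nat.card D = r * (n - 1)) (h1 : (1 : G) ∉ D) (hsym : D⁻¹ = D) :
    IsLatinPDS D n r ↔
      ∀ χ : G →* ℂˣ, χ ≠ 1 → charSum χ D = n - r ∨ charSum χ D = -r := by
  have := Fintype.ofFinite G
  have hn : 1 ≤ n := Nat.pos_of_ne_zero fun hn => by simp [hn] at hv
  have hk' : ((r * (n - 1) : ℕ) : ℂ) = r * (n - 1) := by push_cast [Nat.cast_sub hn]; ring
  simp only [IsLatinPDS, IsRegularPDS, h1, hsym, not_false_eq_true, and_true,
    isPDS_iff_charSum hv hk h1 hsym, hk']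
  refine ⟨fun h χ hχ => ?_, fun h χ => ?_⟩
  · have hquad := h χ
    rw [sum_char_eq_zero hχ] at hquad
    have : (charSum χ D - (n - r)) * (charSum χ D + r) = 0 := by
      push_cast at hquad
      linear_combination hquad
    rcases mul_eq_zero.1 this with h | h
    · exact Or.inl (by linear_combination h)
    · exact Or.inr (by linear_combination h)
  · by_cases hχ : χ = 1
    · subst hχ
      have hsum : ∑ g : G, ((1 : G →* ℂˣ) g : ℂ) = n ^ 2 := by
        simp [← Nat.card_eq_fintype_card, hv]
      rw [charSum_eq_card 1 fun _ _ => rfl, hk, hsum]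
      push_cast [Nat.cast_sub hn]
      ring
    · rcases h χ hχ with h | h <;> rw [h, sum_char_eq_zero hχ] <;> push_cast <;> ring

lemma IsLatinPDS.one_le {D : Set G} {n r : ℕ} (h : IsLatinPDS D n r) : 1 ≤ n :=
  Nat.pos_of_ne_zero fun hn => Nat.card_pos.ne' (by simpa [hn] using h.1.1)

lemma IsLatinPDS.charSum_eq_or {D : Set G} {n r : ℕ} (h : IsLatinPDS D n r) {χ : G →* ℂˣ}
    (hχ : χ ≠ 1) : charSum χ D = n - r ∨ charSum χ D = -r :=
  (isLatinPDS_iff_charSum h.1.1 h.1.2.1 h.2.1 h.2.2).1 h χ hχ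

lemma isLatinPDS_of_charSum_eq_or {D : Set G} {n r : ℕ} (hv : Nat.card G = n ^ 2)
    (hk : Nat.card D = r * (n - 1)) (h1 : (1 : G) ∉ D)
    (h : ∀ χ : G →* ℂˣ, χ ≠ 1 → charSum χ D = n - r ∨ charSum χ D = -r) :
    IsLatinPDS D n r := by
  have := Fintype.ofFinite G
  have hsym : D⁻¹ = D := inv_eq_self_of_forall_conj_charSum fun χ => by
    by_cases hχ : χ = 1
    · simp [hχ, charSum_eq_card]
    · rcases h χ hχ with h | h <;> simp [h]
  exact (isLatinPDS_iff_charSum hv hk h1 hsym).2 h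

end LatinSquareType

lemma charSum_image_subtype_val {G : Type*} [Group G] (V : Subgroup G) (χ : G →* ℂˣ)
    (S : Set V) : charSum χ (Subtype.val '' S) = charSum (χ.comp V.subtype) S :=
  finsum_mem_image Subtype.val_injective.injOn

section Quotients

variable {K : Type*} [CommGroup K] [Finite K]

lemma charSum_comp_mk'_preimage (N : Subgroup K) (ψ : K ⧸ N →* ℂˣ) (S : Set (K ⧸ N)) :
    charSum (ψ.comp (QuotientGroup.mk' N)) (QuotientGroup.mk ⁻¹' S) =
      Nat.card N * charSum ψ S := by
  have := Fintype.ofFinite K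
  have := Fintype.ofFinite (K ⧸ N)
  have hfiber (q : K ⧸ N) :
      (Finset.univ.filter fun k : K => (k : K ⧸ N) = q).card = Nat.card N := by
    simpa [Nat.card_eq_fintype_card, Fintype.card_subtype] using
      QuotientGroup.card_preimage_mk N {q}
  rw [charSum_eq_sum_ite, charSum_eq_sum_ite, Finset.mul_sum]
  change ∑ k : K, (if (k : K ⧸ N) ∈ S then (ψ k : ℂ) else 0) = _
  rw [Finset.sum_comp (fun q : K ⧸ N => if q ∈ S then (ψ q : ℂ) else 0) QuotientGroup.mk,
    Finset.image_univ_of_surjective QuotientGroup.mk_surjective]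
  simp [hfiber]

lemma charSum_preimage_mk_eq_zero {N : Subgroup K} {φ : K →* ℂˣ} (hφ : ¬IsPrincipalOn φ N)
    (S : Set (K ⧸ N)) : charSum φ (QuotientGroup.mk ⁻¹' S) = 0 := by
  obtain ⟨x, hxN, hx⟩ : ∃ x ∈ N, φ x ≠ 1 := by simpa [IsPrincipalOn] using hφ
  have := Fintype.ofFinite K
  refine charSum_eq_zero_of_mul_mem_iff hx fun g => ?_
  simp [QuotientGroup.mk_mul, (QuotientGroup.eq_one_iff x).2 hxN]

end Quotients

section Lifting

variable {G : Type*} [CommGroup G] {H U V : Subgroup G}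

lemma charSum_image_preimage_mk_eq_zero [Finite G] (hHV : H ≤ V) {χ : G →* ℂˣ}
    (hχ : ¬IsPrincipalOn χ H) (S : Set (V ⧸ H.subgroupOf V)) :
    charSum χ (Subtype.val '' (QuotientGroup.mk ⁻¹' S)) = 0 := by
  rw [charSum_image_subtype_val]
  exact charSum_preimage_mk_eq_zero (fun h => hχ fun x hx =>
    h ⟨x, hHV hx⟩ (Subgroup.mem_subgroupOf.2 hx)) S

lemma exists_charSum_image_preimage_mk [Finite G] (hHV : H ≤ V) {χ : G →* ℂˣ}
    (hχ : IsPrincipalOn χ H) (S : Set (V ⧸ H.subgroupOf V)) :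
    ∃ ψ : V ⧸ H.subgroupOf V →* ℂˣ, (ψ = 1 ↔ IsPrincipalOn χ V) ∧
      charSum χ (Subtype.val '' (QuotientGroup.mk ⁻¹' S)) = Nat.card H * charSum ψ S := by
  have hker : H.subgroupOf V ≤ (χ.comp V.subtype).ker := fun v hv =>
    hχ v (Subgroup.mem_subgroupOf.1 hv)
  refine ⟨QuotientGroup.lift _ _ hker, ⟨fun h v hv => ?_, fun h => ?_⟩, ?_⟩
  · simpa using DFunLike.congr_fun h ((⟨v, hv⟩ : V) : V ⧸ H.subgroupOf V)
  · ext v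
    simpa using h v v.2
  · rw [charSum_image_subtype_val, ← Nat.card_congr (Subgroup.subgroupOfEquivOfLe hHV).toEquiv,
      ← charSum_comp_mk'_preimage, QuotientGroup.lift_comp_mk']

lemma card_image_preimage_mk (hHV : H ≤ V) (S : Set (V ⧸ H.subgroupOf V)) :
    Nat.card (Subtype.val '' (QuotientGroup.mk ⁻¹' S)) = Nat.card H * Nat.card S := by
  rw [Nat.card_image_of_injective Subtype.val_injective, QuotientGroup.card_preimage_mk,
    Nat.card_congr (Subgroup.subgroupOfEquivOfLe hHV).toEquiv]

lemma image_preimage_mk_compl_map_subgroupOf (hHU : H ≤ U) :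
    Subtype.val '' (QuotientGroup.mk ⁻¹' (Set.univ \
      (((U.subgroupOf V).map (QuotientGroup.mk' (H.subgroupOf V)) :
        Subgroup (V ⧸ H.subgroupOf V)) : Set (V ⧸ H.subgroupOf V)))) = (V : Set G) \ U := by
  have hmem (v : V) : (v : V ⧸ H.subgroupOf V) ∈ (U.subgroupOf V).map (QuotientGroup.mk' _) ↔
      (v : G) ∈ U := by
    have hcomap : ((U.subgroupOf V).map (QuotientGroup.mk' (H.subgroupOf V))).comap
        (QuotientGroup.mk' _) = U.subgroupOf V := by
      rw [Subgroup.comap_map_eq, QuotientGroup.ker_mk',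
        sup_eq_left.2 (Subgroup.subgroupOf_mono V hHU)]
    simpa only [Subgroup.mem_comap, Subgroup.mem_subgroupOf, QuotientGroup.mk'_apply] using
      SetLike.ext_iff.1 hcomap v
  ext x
  simp only [Set.mem_image, Set.mem_preimage, Set.mem_sdiff, Set.mem_univ, true_and,
    SetLike.mem_coe, hmem]
  constructor
  · rintro ⟨v, hv, rfl⟩
    exact ⟨v.2, hv⟩
  · rintro ⟨hxV, hxU⟩
    exact ⟨⟨x, hxV⟩, hxU, rfl⟩

end Lifting

section Construction

variable {G : Type*} [CommGroup G] {H V : Subgroup G} {c t : ℕ} {R : Fin t → Set G}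

lemma charSum_mem_charMultiset (χ : G →* ℂˣ) (R : Fin t → Set G) (i : Fin t) :
    charSum χ (R i) ∈ charMultiset χ R :=
  Multiset.mem_map_of_mem _ (Finset.mem_univ i)

lemma IsLPPartition.disjoint_image_preimage_mk (hR : IsLPPartition c t R V H)
    (S : Set (V ⧸ H.subgroupOf V)) (i : Fin t) :
    Disjoint (Subtype.val '' (QuotientGroup.mk ⁻¹' S)) (R i) :=
  Set.disjoint_of_subset (Subtype.coe_image_subset _ _) (hR.2.2.2.2.2.1 ▸ Set.subset_iUnion R i)
    Set.disjoint_sdiff_right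

variable [Finite G]

theorem charSum_image_preimage_mk_union_eq_or (hR : IsLPPartition (t * c) t R V H)
    (hH : Nat.card H = t) {S : Set (V ⧸ H.subgroupOf V)} (hS : IsLatinPDS S (t * c) c)
    (i : Fin t) {χ : G →* ℂˣ} (hχ : χ ≠ 1) :
    charSum χ (Subtype.val '' (QuotientGroup.mk ⁻¹' S) ∪ R i) =
        ((t * (t * c) : ℕ) : ℂ) - ((t * c : ℕ) : ℂ) ∨
      charSum χ (Subtype.val '' (QuotientGroup.mk ⁻¹' S) ∪ R i) = -((t * c : ℕ) : ℂ) := by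
  have hHV := hR.2.2.1
  have hRi := charSum_mem_charMultiset χ R i
  obtain ⟨hRV, hRVH, hRH⟩ := hR.2.2.2.2.2.2 χ hχ
  rw [charSum_union χ (hR.disjoint_image_preimage_mk S i)]
  by_cases hχH : IsPrincipalOn χ H
  · obtain ⟨ψ, hψ1, hψ⟩ := exists_charSum_image_preimage_mk hHV hχH S
    rw [hψ, hH]
    by_cases hχV : IsPrincipalOn χ V
    · obtain rfl := hψ1.2 hχV
      rw [hRV hχV] at hRi
      right
      rw [charSum_eq_card 1 fun _ _ => rfl, hS.1.2.1, Multiset.eq_of_mem_replicate hRi]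
      push_cast [Nat.cast_sub hS.one_le]
      ring
    · rw [hRVH hχV hχH] at hRi
      rw [Multiset.eq_of_mem_replicate hRi, add_zero]
      rcases hS.charSum_eq_or (mt hψ1.1 hχV) with h | h
      · left; rw [h]; push_cast; ring
      · right; rw [h]; push_cast; ring
  · rw [charSum_image_preimage_mk_eq_zero hHV hχH, zero_add]
    rw [hRH hχH] at hRi
    rcases Multiset.mem_cons.1 hRi with h | h
    · left; rw [h]; push_cast; ring
    · right; rw [Multiset.eq_of_mem_replicate h]

theorem isLatinPDS_image_preimage_mk_union (hR : IsLPPartition (t * c) t R V H)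
    (hH : Nat.card H = t) {S : Set (V ⧸ H.subgroupOf V)} (hS : IsLatinPDS S (t * c) c)
    (i : Fin t) :
    IsLatinPDS (Subtype.val '' (QuotientGroup.mk ⁻¹' S) ∪ R i) (t * (t * c)) (t * c) := by
  have htc : 1 ≤ t * c := hS.one_le
  have ht : 1 ≤ t := Nat.pos_of_mul_pos_right htc
  have hcard : Nat.card ↥(Subtype.val '' (QuotientGroup.mk ⁻¹' S) ∪ R i) =
      t * c * (t * (t * c) - 1) := by
    rw [Nat.card_coe_set_eq, Set.ncard_union_eq (hR.disjoint_image_preimage_mk S i),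
      ← Nat.card_coe_set_eq, ← Nat.card_coe_set_eq, card_image_preimage_mk hR.2.2.1, hH,
      hS.1.2.1, hR.2.2.2.1 i]
    zify [htc, ht, Nat.one_le_iff_ne_zero.2 (Nat.mul_pos ht htc).ne']
    ring
  have h1 : (1 : G) ∉ Subtype.val '' (QuotientGroup.mk ⁻¹' S) ∪ R i := by
    rintro (⟨v, hv, hv1⟩ | h)
    · obtain rfl : v = 1 := Subtype.ext hv1
      exact hS.2.1 hv
    · exact ((hR.2.2.2.2.2.1 ▸ Set.subset_iUnion R i) h).2 V.one_mem
  exact isLatinPDS_of_charSum_eq_or (hR.1.trans (by ring)) hcard h1 fun χ hχ =>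
    charSum_image_preimage_mk_union_eq_or hR hH hS i hχ

end Construction

theorem stmt_11_general {G : Type*} [CommGroup G] [Finite G] (c t : ℕ)
    (H U V : Subgroup G) (hHU : H ≤ U) (hUV : U ≤ V)
    (hH : Nat.card H = t) (hU : Nat.card U = t ^ 2 * c)
    (R : Fin t → Set G) (hR : IsLPPartition (t * c) t R V H)
    (P : Fin t → Set (V ⧸ H.subgroupOf V))
    (hP : IsLPPacking c t P ((U.subgroupOf V).map (QuotientGroup.mk' (H.subgroupOf V)))) :
    IsLPPacking (t * c) t
      (fun i =>
        (Subtype.val '' ((QuotientGroup.mk (s := H.subgroupOf V)) ⁻¹' P i)) ∪ R i) U := by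
  obtain ⟨-, -, hPlatin, hPdisj, hPunion⟩ := hP
  refine ⟨hR.1.trans (by ring), hU.trans (by ring),
    fun i => isLatinPDS_image_preimage_mk_union hR hH (hPlatin i) i, fun i j hij => ?_, ?_⟩
  · exact Set.disjoint_union_left.2
      ⟨Set.disjoint_union_right.2 ⟨Set.disjoint_image_of_injective Subtype.val_injective
        ((hPdisj i j hij).preimage _), hR.disjoint_image_preimage_mk (P i) j⟩,
      Set.disjoint_union_right.2 ⟨(hR.disjoint_image_preimage_mk (P j) i).symm,
        hR.2.2.2.2.1 i j hij⟩⟩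
  · rw [Set.iUnion_union_distrib, ← Set.image_iUnion, ← Set.preimage_iUnion, hPunion,
      image_preimage_mk_compl_map_subgroupOf hHU, hR.2.2.2.2.2.1, Set.union_comm,
      Set.sdiff_union_sdiff_cancel (Set.subset_univ _) hUV]

theorem stmt_11 {G : Type*} [CommGroup G] [Finite G] (c t : ℕ)
    (H U V : Subgroup G) (hHU : H ≤ U) (hUV : U ≤ V)
    (hG : Nat.card G = t ^ 4 * c ^ 2) (hH : Nat.card H = t)
    (hU : Nat.card U = t ^ 2 * c) (hV : Nat.card V = t ^ 3 * c ^ 2)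
    (R : Fin t → Set G) (hR : IsLPPartition (t * c) t R V H)
    (P : Fin t → Set (V ⧸ H.subgroupOf V))
    (hP : IsLPPacking c t P ((U.subgroupOf V).map (QuotientGroup.mk' (H.subgroupOf V)))) :
    IsLPPacking (t * c) t
      (fun i =>
        (Subtype.val '' ((QuotientGroup.mk (s := H.subgroupOf V)) ⁻¹' P i)) ∪ R i) U :=
  stmt_11_general c t H U V hHU hUV hH hU R hR P hP
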